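/- Let Φ1 be a state, suppose the type 2 move T2^i is valid for Φ1 and the type 2 move T2^k is invalid for T2^i(Φ1). Then, after swapping the two moves, it is not possible that both are invalid: either T2^k is valid for Φ1, or T2^i is valid for T2^k(Φ1). -/

import Mathlib

namespace CPaper


/-- The six types of moves on states (all indices 0-based). -/
inductive Move where
  | t1 (d : ℕ)
  | t2 (i : ℕ)
  | t3 (i j : ℕ)
  | t4 (i j : ℕ)
  | t5 (i j : ℕ)
  | t6 (i j : ℕ)

/-- A state is a list of tuples of integers. -/
abbrev State := List (List ℤ)

/-- A genuine state: at least one tuple, and all tuples nonempty. -/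
def IsState (Φ : State) : Prop := Φ ≠ [] ∧ ∀ t ∈ Φ, t ≠ []

/-- The entries of a state, read in order (flattened). -/
def entries (Φ : State) : List ℤ := Φ.flatten

/-- The number of positions of a state. -/
def numPos (Φ : State) : ℕ := (entries Φ).length

/-- The value at the (0-based) position `i` of the state `Φ`. -/
def entry (Φ : State) (i : ℕ) : ℤ := (entries Φ).getD i 0

/-- The (0-based) index of the tuple containing the flat position `i`. -/
def tupleIdx : State → ℕ → ℕ
  | [], _ => 0
  | t :: ts, i => if i < t.length then 0 else tupleIdx ts (i - t.length) + 1

/-- Positions `i` and `j` lie in the same tuple of `Φ`. -/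
def SameTuple (Φ : State) (i j : ℕ) : Prop := tupleIdx Φ i = tupleIdx Φ j

/-- Position `i` is dominant in `Φ`: its value bounds the absolute value of
every entry of the tuple containing it. -/
def DominantAt (Φ : State) (i : ℕ) : Prop :=
  ∀ k, k < numPos Φ → SameTuple Φ i k → |entry Φ k| ≤ entry Φ i

/-- Apply `f` at flat position `i`, preserving the tuple structure. -/
def modifyFlat (f : ℤ → ℤ) : ℕ → State → State
  | _, [] => []
  | i, t :: ts =>
    if i < t.length then (t.take i ++ f (t.getD i 0) :: t.drop (i + 1)) :: ts
    else t :: modifyFlat f (i - t.length) ts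

/-- Concatenate the `d`-th and `(d+1)`-th tuples of `Φ` (0-based). -/
def joinAt (Φ : State) (d : ℕ) : State :=
  Φ.take d ++ (Φ.getD d [] ++ Φ.getD (d + 1) []) :: Φ.drop (d + 2)

/-- The action of a move on a state. -/
def Move.apply : Move → State → State
  | .t1 d, Φ => joinAt Φ d
  | .t2 i, Φ => modifyFlat (· + 1) i Φ
  | .t3 i j, Φ => modifyFlat (· - 1) j (modifyFlat (· + 1) i Φ)
  | .t4 i j, Φ => modifyFlat (· - 1) j (modifyFlat (· + 1) i Φ)
  | .t5 i j, Φ => modifyFlat (· + 1) j (modifyFlat (· + 1) i Φ)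
  | .t6 i j, Φ => modifyFlat (· + 1) j (modifyFlat (· + 1) i Φ)

/-- A move is admissible for `Φ` when its indices are within bounds. -/
def Move.Admissible : Move → State → Prop
  | .t1 d, Φ => d + 1 < Φ.length
  | .t2 i, Φ => i < numPos Φ
  | .t3 i j, Φ => i < numPos Φ ∧ j < numPos Φ ∧ i ≠ j
  | .t4 i j, Φ => i < numPos Φ ∧ j < numPos Φ ∧ i ≠ j
  | .t5 i j, Φ => i < numPos Φ ∧ j < numPos Φ ∧ i ≠ j
  | .t6 i j, Φ => i < numPos Φ ∧ j < numPos Φ ∧ i ≠ j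

/-- Validity of a move for a state. -/
def Move.Valid : Move → State → Prop
  | .t1 d, Φ => d + 1 < Φ.length
  | .t2 i, Φ => i < numPos Φ ∧ DominantAt Φ i
  | .t3 i j, Φ =>
      i < numPos Φ ∧ j < numPos Φ ∧ i ≠ j ∧ SameTuple Φ i j ∧ DominantAt Φ i ∧ entry Φ j ≤ 0
  | .t4 i j, Φ =>
      i < numPos Φ ∧ j < numPos Φ ∧ i ≠ j ∧ SameTuple Φ i j ∧ DominantAt Φ i ∧ 0 < entry Φ j
  | .t5 i j, Φ =>
      i < numPos Φ ∧ j < numPos Φ ∧ i ≠ j ∧ SameTuple Φ i j ∧ DominantAt Φ i ∧ entry Φ j < 0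
  | .t6 i j, Φ =>
      i < numPos Φ ∧ j < numPos Φ ∧ i ≠ j ∧ SameTuple Φ i j ∧ DominantAt Φ i ∧ 0 ≤ entry Φ j

def Move.isType1 : Move → Prop
  | .t1 _ => True
  | _ => False

def Move.isType2 : Move → Prop
  | .t2 _ => True
  | _ => False

def Move.isType3 : Move → Prop
  | .t3 _ _ => True
  | _ => False

/-- The move is of one of the types 1, 2 or 3. -/
def Move.isType123 : Move → Prop
  | .t1 _ => True
  | .t2 _ => True
  | .t3 _ _ => True
  | _ => False

/-- `ValidSeq ms Φ Ψ`: the list of moves `ms`, applied in order starting from `Φ`,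
consists of valid moves and ends at `Ψ`. -/
def ValidSeq : List Move → State → State → Prop
  | [], Φ, Ψ => Φ = Ψ
  | m :: ms, Φ, Ψ => m.Valid Φ ∧ ValidSeq ms (m.apply Φ) Ψ

/-- A tuple of integers is C*_{Z,6}-realizable: the one-tuple state `[l]` is reachable
from `((0),...,(0))` by a finite sequence of valid moves of types 1–6. -/
def CStarZ6 (l : List ℤ) : Prop :=
  ∃ ms : List Move, ValidSeq ms (List.replicate l.length ([0] : List ℤ)) [l]

/-- A tuple of integers is C*_{Z,3}-realizable: the one-tuple state `[l]` is reachable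
from `((0),...,(0))` by a finite sequence of valid moves of types 1, 2 and 3. -/
def CStarZ3 (l : List ℤ) : Prop :=
  ∃ ms : List Move, (∀ m ∈ ms, m.isType123) ∧
    ValidSeq ms (List.replicate l.length ([0] : List ℤ)) [l]

/-!
If `k` is dominant in `Φ` we are done, so assume it is not. Raising `Φ[k]` can only break the
dominance of `i` when `k` lies in the tuple of `i`. There `|Φ[k]| ≤ Φ[i]`, and equality
`Φ[k] = Φ[i]` would make `k` dominant too; hence `Φ[k] < Φ[i]` and `|Φ[k] + 1| ≤ Φ[i]`.
-/

theorem List.modify_append_of_lt_length {α : Type*} (f : α → α) {i : ℕ} (l₁ l₂ : List α)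
    (h : i < l₁.length) : (l₁ ++ l₂).modify i f = l₁.modify i f ++ l₂ := by
  apply List.ext_getElem?
  intro m
  simp only [List.getElem?_modify, List.getElem?_append, List.length_modify]
  split_ifs <;> grind

theorem List.modify_append_of_length_le {α : Type*} (f : α → α) {i : ℕ} (l₁ l₂ : List α)
    (h : l₁.length ≤ i) : (l₁ ++ l₂).modify i f = l₁ ++ l₂.modify (i - l₁.length) f := by
  apply List.ext_getElem?
  intro m
  simp only [List.getElem?_modify, List.getElem?_append]
  split_ifs <;> grind

section modifyFlat

variable (f : ℤ → ℤ) (i : ℕ) (Φ : State)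

theorem entries_modifyFlat : entries (modifyFlat f i Φ) = (entries Φ).modify i f := by
  induction Φ generalizing i with
  | nil => simp [entries, modifyFlat]
  | cons t ts ih =>
    simp only [entries, List.flatten_cons] at ih ⊢
    by_cases h : i < t.length
    · rw [modifyFlat, if_pos h, List.flatten_cons, List.getD_eq_getElem t 0 h,
        ← List.modify_eq_take_cons_drop h, List.modify_append_of_lt_length f t _ h]
    · rw [modifyFlat, if_neg h, List.flatten_cons, ih,
        List.modify_append_of_length_le f t _ (not_lt.mp h)]

theorem numPos_modifyFlat : numPos (modifyFlat f i Φ) = numPos Φ := by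
  simp [numPos, entries_modifyFlat]

theorem entry_modifyFlat_self (h : i < numPos Φ) :
    entry (modifyFlat f i Φ) i = f (entry Φ i) := by
  simp_all [entry, numPos, entries_modifyFlat]

theorem entry_modifyFlat_of_ne {j : ℕ} (h : j ≠ i) :
    entry (modifyFlat f i Φ) j = entry Φ j := by
  simp [entry, entries_modifyFlat, List.getD_eq_getElem?_getD, h.symm]

theorem tupleIdx_modifyFlat (j : ℕ) : tupleIdx (modifyFlat f i Φ) j = tupleIdx Φ j := by
  induction Φ generalizing i j with
  | nil => rfl
  | cons t ts ih =>
    by_cases h : i < t.length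
    · have hlen : (t.take i ++ f (t.getD i 0) :: t.drop (i + 1)).length = t.length := by
        simp; omega
      simp only [modifyFlat, if_pos h, tupleIdx, hlen]
    · simp only [modifyFlat, if_neg h, tupleIdx, ih]

theorem sameTuple_modifyFlat {j l : ℕ} : SameTuple (modifyFlat f i Φ) j l ↔ SameTuple Φ j l := by
  simp only [SameTuple, tupleIdx_modifyFlat]

end modifyFlat

theorem DominantAt.modifyFlat {Φ : State} {i k : ℕ} {f : ℤ → ℤ} (hi : DominantAt Φ i)
    (hki : k ≠ i) (hk : SameTuple Φ i k → |f (entry Φ k)| ≤ entry Φ i) :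
    DominantAt (modifyFlat f k Φ) i := by
  intro j hj hij
  rw [numPos_modifyFlat] at hj
  rw [sameTuple_modifyFlat] at hij
  rw [entry_modifyFlat_of_ne f k Φ hki.symm]
  rcases eq_or_ne j k with rfl | hjk
  · rw [entry_modifyFlat_self f j Φ hj]
    exact hk hij
  · rw [entry_modifyFlat_of_ne f k Φ hjk]
    exact hi j hj hij

theorem DominantAt.of_sameTuple_of_entry_eq {Φ : State} {i k : ℕ} (hi : DominantAt Φ i)
    (hik : SameTuple Φ i k) (heq : entry Φ k = entry Φ i) : DominantAt Φ k := fun j hj hkj =>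
  heq ▸ hi j hj (hik.trans hkj)

theorem T2_valid_T2_invalid_swap_general (Φ : State) (i k : ℕ)
    (hval : (Move.t2 i).Valid Φ)
    (hadm : (Move.t2 k).Admissible ((Move.t2 i).apply Φ)) :
    (Move.t2 k).Valid Φ ∨ (Move.t2 i).Valid ((Move.t2 k).apply Φ) := by
  obtain ⟨hi, hdom⟩ := hval
  have hk : k < numPos Φ := by
    simpa only [Move.Admissible, Move.apply, numPos_modifyFlat] using hadm
  by_cases hkdom : DominantAt Φ k
  · exact .inl ⟨hk, hkdom⟩
  refine .inr ⟨(numPos_modifyFlat _ k Φ).symm ▸ hi, hdom.modifyFlat ?_ fun hik => ?_⟩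
  · rintro rfl
    exact hkdom hdom
  · have hle := abs_le.mp (hdom k hk hik)
    have hne : entry Φ k ≠ entry Φ i := fun h => hkdom (hdom.of_sameTuple_of_entry_eq hik h)
    rw [abs_le]
    constructor <;> omega

/-- If a valid type 2 move is followed by an invalid (admissible but not valid)
type 2 move, then after the swap it is not possible that both moves are invalid. -/
theorem T2_valid_T2_invalid_swap (Φ : State) (hΦ : IsState Φ) (i k : ℕ)
    (hval : (Move.t2 i).Valid Φ)
    (hadm : (Move.t2 k).Admissible ((Move.t2 i).apply Φ))
    (hinv : ¬ (Move.t2 k).Valid ((Move.t2 i).apply Φ)) :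
    (Move.t2 k).Valid Φ ∨ (Move.t2 i).Valid ((Move.t2 k).apply Φ) :=
  T2_valid_T2_invalid_swap_general Φ i k hval hadm

end CPaper
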